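/- arXiv:1202.1786 — 5 statements merged into one kernel-verified Lean document; each statement's English description precedes it below -/
import Mathlib

section
/- Let K be a field and H a subgroup of the multiplicative group K^×. The following are equivalent: (1) there exists a valuation subring O of K whose unit group O^× is contained in H; (2) −1 ∈ H; for every x ∈ K^× with x ∉ H one has 1+x ∈ H ∪ xH; and whenever x, y ∈ K^× \ H satisfy 1+x ∈ H and 1+y ∈ H, one has 1+x(1+y) ∈ H. -/
/-!
If `O^× ≤ H` and `x ∉ H`, then `x` is not a unit of `O`. When `x` lies in the maximal ideal `𝔪`,
`1 + x` is a unit, hence in `H`; otherwise `1 + x = x (1 + x⁻¹) ∈ xH`. So `x ∉ H` and `1 + x ∈ H`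
force `x ∈ 𝔪`, and then also `x (1 + y) ∈ 𝔪` for another such `y`.

Conversely, `small H = {x ≠ 0 : x ∉ H, 1 + x ∈ H}` plays the role of `𝔪 \ H`, and
`{0} ∪ small H ∪ smallStab H`, where `smallStab H = {x ≠ 0 : x • small H ⊆ small H}`, is a
valuation ring whose units lie in `H`. The conditions say that `small H` contains `x` or `x⁻¹`
for every `x ∉ H`, and that it is closed under `(x, y) ↦ x (1 + y)`. Iterating the latter,
`x₁ (1 + x₂ (1 + ⋯ (1 + xₙ)))` is small whenever all `xᵢ` are; if moreover `x₁ ⋯ xₙ = 1`, this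
element is `1` plus the same expression for `x₁, …, xₙ₋₁`, which is impossible. So no product of
`n ≥ 2` small elements equals `1`, and the ring axioms reduce to this and a few identities of the
same kind.
-/

/-- The Horner form `a₁ (1 + a₂ (1 + ⋯ (1 + aₙ)))` of `a₁ + a₁a₂ + ⋯ + a₁⋯aₙ`. -/
def List.prefixProdSum {R : Type*} [Semiring R] : List R → R
  | [] => 0
  | a :: l => a * (1 + prefixProdSum l)

theorem List.prefixProdSum_append_singleton {R : Type*} [Semiring R] (l : List R) (b : R) :
    (l ++ [b]).prefixProdSum = l.prefixProdSum + l.prod * b := by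
  induction l with
  | nil => simp [prefixProdSum]
  | cons a l ih =>
    simp only [cons_append, prefixProdSum, ih, prod_cons, mul_add, mul_assoc, add_assoc]

namespace Subgroup

variable {K : Type*} [Field K] (H : Subgroup Kˣ)

/-- `a ∈ H.coeSubmonoid` unfolds to `∃ h ∈ H, (h : K) = a`, the form used in `stmt_0`. -/
def coeSubmonoid : Submonoid K := H.toSubmonoid.map (Units.coeHom K)

def small : Set K := {a | a ≠ 0 ∧ a ∉ H.coeSubmonoid ∧ 1 + a ∈ H.coeSubmonoid}

def smallStab : Set K := {a | a ≠ 0 ∧ ∀ b ∈ H.small, a * b ∈ H.small}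

variable {H}

theorem coe_mem_coeSubmonoid {x : Kˣ} : (x : K) ∈ H.coeSubmonoid ↔ x ∈ H :=
  ⟨fun ⟨_, hy, hyx⟩ => Units.ext hyx ▸ hy, fun hx => ⟨x, hx, rfl⟩⟩

theorem ne_zero_of_mem_coeSubmonoid {a : K} (ha : a ∈ H.coeSubmonoid) : a ≠ 0 := by
  obtain ⟨x, -, rfl⟩ := ha
  exact x.ne_zero

theorem inv_mem_coeSubmonoid {a : K} (ha : a ∈ H.coeSubmonoid) : a⁻¹ ∈ H.coeSubmonoid := by
  obtain ⟨x, hx, rfl⟩ := ha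
  exact ⟨x⁻¹, H.inv_mem hx, by simp⟩

theorem mul_mem_coeSubmonoid_iff {a b : K} (ha : a ∈ H.coeSubmonoid) :
    a * b ∈ H.coeSubmonoid ↔ b ∈ H.coeSubmonoid := by
  refine ⟨fun hab => ?_, mul_mem ha⟩
  simpa [ne_zero_of_mem_coeSubmonoid ha] using mul_mem (inv_mem_coeSubmonoid ha) hab

theorem ne_one_add_of_mem_small {a b : K} (ha : a ∈ H.small) (hb : b ∈ H.small) : a ≠ 1 + b :=
  fun h => ha.2.1 (h ▸ hb.2.2)

theorem one_not_mem_small : (1 : K) ∉ H.small := fun h => h.2.1 (one_mem _)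

section ValuationSubring

variable {O : ValuationSubring K} (hO : O.unitGroup ≤ H)
include hO

theorem mem_coeSubmonoid_of_valuation_eq_one {a : K} (ha : O.valuation a = 1) :
    a ∈ H.coeSubmonoid := by
  have ha0 : a ≠ 0 := by rintro rfl; simp at ha
  exact ⟨Units.mk0 a ha0, hO ((O.mem_unitGroup_iff _).2 ha), rfl⟩

theorem one_add_mem_coeSubmonoid_of_valuation_lt_one {a : K} (ha : O.valuation a < 1) :
    1 + a ∈ H.coeSubmonoid :=
  mem_coeSubmonoid_of_valuation_eq_one hO (O.valuation.map_one_add_of_lt ha)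

theorem one_add_inv_mem_coeSubmonoid_of_one_lt_valuation {a : K} (ha : 1 < O.valuation a) :
    1 + a⁻¹ ∈ H.coeSubmonoid :=
  one_add_mem_coeSubmonoid_of_valuation_lt_one hO <| by
    rwa [map_inv₀, inv_lt_one₀ (zero_lt_one.trans ha)]

theorem one_add_mem_or_exists_mul_eq_one_add {a : K} (ha : a ∉ H.coeSubmonoid) :
    1 + a ∈ H.coeSubmonoid ∨ ∃ h ∈ H, a * (h : K) = 1 + a := by
  rcases lt_trichotomy (O.valuation a) 1 with h | h | h
  · exact .inl (one_add_mem_coeSubmonoid_of_valuation_lt_one hO h)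
  · exact absurd (mem_coeSubmonoid_of_valuation_eq_one hO h) ha
  · obtain ⟨u, hu, hua⟩ := one_add_inv_mem_coeSubmonoid_of_one_lt_valuation hO h
    have ha0 : a ≠ 0 := by rintro rfl; simp at h
    refine .inr ⟨u, hu, ?_⟩
    rw [show (u : K) = 1 + a⁻¹ from hua]
    field_simp
    ring

theorem valuation_lt_one_of_mem_small {a : K} (ha : a ∈ H.small) : O.valuation a < 1 := by
  obtain ⟨ha0, haS, ha1⟩ := ha
  refine lt_of_not_ge fun h => haS ?_
  rcases h.eq_or_lt with h | h
  · exact mem_coeSubmonoid_of_valuation_eq_one hO h.symm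
  · have hinv := one_add_inv_mem_coeSubmonoid_of_one_lt_valuation hO h
    rwa [← mul_mem_coeSubmonoid_iff hinv, show (1 + a⁻¹) * a = 1 + a by field_simp; ring]

theorem one_add_mul_one_add_mem_coeSubmonoid {a b : K} (ha : a ∈ H.small) (hb : b ∈ H.small) :
    1 + a * (1 + b) ∈ H.coeSubmonoid := by
  refine one_add_mem_coeSubmonoid_of_valuation_lt_one hO ?_
  rw [map_mul, O.valuation.map_one_add_of_lt (valuation_lt_one_of_mem_small hO hb), mul_one]
  exact valuation_lt_one_of_mem_small hO ha

end ValuationSubring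

structure IsValuative (H : Subgroup Kˣ) : Prop where
  neg_one_mem : (-1 : K) ∈ H.coeSubmonoid
  mem_small_or_inv_mem_small :
    ∀ a : K, a ≠ 0 → a ∉ H.coeSubmonoid → a ∈ H.small ∨ a⁻¹ ∈ H.small
  mul_one_add_mem_small : ∀ a ∈ H.small, ∀ b ∈ H.small, a * (1 + b) ∈ H.small

theorem IsValuative.of_forall_one_add_mem (hneg : (-1 : Kˣ) ∈ H)
    (hdich : ∀ x : Kˣ, x ∉ H →
      1 + (x : K) ∈ H.coeSubmonoid ∨ ∃ h ∈ H, (x : K) * (h : K) = 1 + x)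
    (hclosed : ∀ x y : Kˣ, x ∉ H → y ∉ H → 1 + (x : K) ∈ H.coeSubmonoid →
      1 + (y : K) ∈ H.coeSubmonoid → 1 + (x : K) * (1 + y) ∈ H.coeSubmonoid) :
    IsValuative H where
  neg_one_mem := ⟨-1, hneg, by simp⟩
  mem_small_or_inv_mem_small a ha0 haS := by
    rcases hdich (Units.mk0 a ha0) (mt coe_mem_coeSubmonoid.2 haS) with h | ⟨u, hu, hua⟩
    · exact .inl ⟨ha0, haS, h⟩
    · refine .inr ⟨inv_ne_zero ha0, fun h => haS (by simpa using inv_mem_coeSubmonoid h), u, hu, ?_⟩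
      simp only [Units.val_mk0] at hua
      change (u : K) = 1 + a⁻¹
      field_simp
      linear_combination hua
  mul_one_add_mem_small a ha b hb := by
    obtain ⟨ha0, haS, ha1⟩ := ha
    obtain ⟨hb0, hbS, hb1⟩ := hb
    refine ⟨mul_ne_zero ha0 (ne_zero_of_mem_coeSubmonoid hb1), ?_,
      hclosed (Units.mk0 a ha0) (Units.mk0 b hb0) (mt coe_mem_coeSubmonoid.2 haS)
        (mt coe_mem_coeSubmonoid.2 hbS) ha1 hb1⟩
    rwa [mul_comm, mul_mem_coeSubmonoid_iff hb1]

namespace IsValuative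

variable (hH : IsValuative H)
include hH

theorem mem_small_of_inv_not_mem_small {a : K} (ha0 : a ≠ 0) (haS : a ∉ H.coeSubmonoid)
    (ha : a⁻¹ ∉ H.small) : a ∈ H.small :=
  (hH.mem_small_or_inv_mem_small a ha0 haS).resolve_right ha

theorem neg_mem_small {a : K} (ha : a ∈ H.small) : -a ∈ H.small := by
  have hnS : -a ∉ H.coeSubmonoid := fun h => ha.2.1 <| by
    simpa using mul_mem hH.neg_one_mem h
  refine hH.mem_small_of_inv_not_mem_small (neg_ne_zero.2 ha.1) hnS fun h => ?_
  have hsub := hH.mul_one_add_mem_small a ha _ h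
  rw [inv_neg, mul_add, mul_neg, mul_inv_cancel₀ ha.1, mul_one, ← sub_eq_add_neg] at hsub
  exact ne_one_add_of_mem_small ha hsub (by ring)

theorem mul_one_sub_mem_small {a b : K} (ha : a ∈ H.small) (hb : b ∈ H.small) :
    a * (1 - b) ∈ H.small := by
  simpa [sub_eq_add_neg] using hH.mul_one_add_mem_small a ha _ (hH.neg_mem_small hb)

theorem prefixProdSum_mem_small {l : List K} (hl : l ≠ []) (hs : ∀ a ∈ l, a ∈ H.small) :
    l.prefixProdSum ∈ H.small := by
  induction l with
  | nil => contradiction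
  | cons a l ih =>
    rcases eq_or_ne l [] with rfl | hl'
    · simpa [List.prefixProdSum] using hs a (by simp)
    · exact hH.mul_one_add_mem_small a (hs a (by simp)) _
        (ih hl' fun b hb => hs b (List.mem_cons_of_mem a hb))

theorem prod_mul_ne_one {l : List K} (hl : l ≠ []) (hs : ∀ a ∈ l, a ∈ H.small) {b : K}
    (hb : b ∈ H.small) : l.prod * b ≠ 1 := by
  intro h
  have hlb := hH.prefixProdSum_mem_small (l := l ++ [b]) (by simp)
    (by simpa [or_imp, forall_and] using ⟨hs, hb⟩)
  rw [List.prefixProdSum_append_singleton, h, add_comm] at hlb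
  exact ne_one_add_of_mem_small hlb (hH.prefixProdSum_mem_small hl hs) rfl

theorem mul_ne_one {a b : K} (ha : a ∈ H.small) (hb : b ∈ H.small) : a * b ≠ 1 := by
  simpa using hH.prod_mul_ne_one (l := [a]) (by simp) (by simpa using ha) hb

theorem mul_mul_ne_one {a b c : K} (ha : a ∈ H.small) (hb : b ∈ H.small) (hc : c ∈ H.small) :
    a * b * c ≠ 1 := by
  simpa using hH.prod_mul_ne_one (l := [a, b]) (by simp) (by simp [ha, hb]) hc

theorem mul_mul_mul_ne_one {a b c d : K} (ha : a ∈ H.small) (hb : b ∈ H.small)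
    (hc : c ∈ H.small) (hd : d ∈ H.small) : a * b * c * d ≠ 1 := by
  simpa [mul_assoc] using hH.prod_mul_ne_one (l := [a, b, c]) (by simp) (by simp [ha, hb, hc]) hd

theorem mem_smallStab_of_mem {a : K} (haS : a ∈ H.coeSubmonoid)
    (h : ∀ r ∈ H.small, (a * r)⁻¹ ∉ H.small) : a ∈ H.smallStab :=
  ⟨ne_zero_of_mem_coeSubmonoid haS, fun r hr => hH.mem_small_of_inv_not_mem_small
    (mul_ne_zero (ne_zero_of_mem_coeSubmonoid haS) hr.1)
    (fun h => hr.2.1 ((mul_mem_coeSubmonoid_iff haS).1 h)) (h r hr)⟩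

theorem mul_mem_small_or_smallStab {a b : K} (ha : a ∈ H.small) (hb : b ∈ H.small) :
    a * b ∈ H.small ∪ H.smallStab := by
  have hab : a * b ≠ 0 := mul_ne_zero ha.1 hb.1
  by_cases hS : a * b ∈ H.coeSubmonoid
  · refine .inr (hH.mem_smallStab_of_mem hS fun r hr h => hH.mul_mul_mul_ne_one h ha hb hr ?_)
    field_simp [ha.1, hb.1, hr.1]
  · exact .inl (hH.mem_small_of_inv_not_mem_small hab hS fun h =>
      hH.mul_mul_ne_one h ha hb (by rw [mul_assoc, inv_mul_cancel₀ hab]))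

theorem mul_mem {a b : K} (ha : a ∈ H.small ∪ H.smallStab) (hb : b ∈ H.small ∪ H.smallStab) :
    a * b ∈ H.small ∪ H.smallStab := by
  rcases ha with ha | ha <;> rcases hb with hb | hb
  · exact hH.mul_mem_small_or_smallStab ha hb
  · exact .inl (mul_comm a b ▸ hb.2 a ha)
  · exact .inl (ha.2 b hb)
  · exact .inr ⟨mul_ne_zero ha.1 hb.1, fun r hr => mul_assoc a b r ▸ ha.2 _ (hb.2 r hr)⟩

theorem neg_mem {a : K} (ha : a ∈ H.small ∪ H.smallStab) : -a ∈ H.small ∪ H.smallStab := by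
  rcases ha with ha | ha
  · exact .inl (hH.neg_mem_small ha)
  · exact .inr ⟨neg_ne_zero.2 ha.1, fun r hr => neg_mul a r ▸ hH.neg_mem_small (ha.2 r hr)⟩

theorem mul_add_ne_one {a b c : K} (hc : c ∈ H.small) (ha : a ∈ H.small ∪ H.smallStab)
    (hb : b ∈ H.small ∪ H.smallStab) : c * (a + b) ≠ 1 := by
  have small_add : ∀ {a b : K}, a ∈ H.small → b ∈ H.small ∪ H.smallStab → c * (a + b) ≠ 1 := by
    intro a b ha hb h
    rcases hb with hb | hb
    · exact ne_one_add_of_mem_small (hH.mul_one_add_mem_small c hc b hb)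
        (hH.mul_one_sub_mem_small hc ha) (by linear_combination h)
    · exact ne_one_add_of_mem_small
        (hH.mul_one_add_mem_small a ha _ (hH.mul_one_sub_mem_small hc ha))
        (hH.mul_one_sub_mem_small (hH.neg_mem_small (hb.2 c hc)) ha)
        (by linear_combination (1 - a) * h)
  rcases ha with ha | ha
  · exact small_add ha hb
  rcases hb with hb | hb
  · exact add_comm a b ▸ small_add hb (.inr ha)
  · exact fun h => ne_one_add_of_mem_small (ha.2 c hc) (hH.neg_mem_small (hb.2 c hc))
      (by linear_combination h)

theorem add_mem {a b : K} (ha : a ∈ H.small ∪ H.smallStab) (hb : b ∈ H.small ∪ H.smallStab)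
    (hab : a + b ≠ 0) : a + b ∈ H.small ∪ H.smallStab := by
  by_cases hS : a + b ∈ H.coeSubmonoid
  · refine .inr (hH.mem_smallStab_of_mem hS fun r hr hc => hH.mul_add_ne_one hc
      (hH.mul_mem ha (.inl hr)) (hH.mul_mem hb (.inl hr)) ?_)
    field_simp [hr.1]
  · exact .inl (hH.mem_small_of_inv_not_mem_small hab hS fun hc =>
      hH.mul_add_ne_one hc ha hb (inv_mul_cancel₀ hab))

theorem mem_or_inv_mem {a : K} (ha : a ≠ 0) :
    a ∈ H.small ∪ H.smallStab ∨ a⁻¹ ∈ H.small ∪ H.smallStab := by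
  by_cases haS : a ∈ H.coeSubmonoid
  · by_cases hst : a ∈ H.smallStab
    · exact .inl (.inr hst)
    obtain ⟨b, hb, hab⟩ : ∃ b ∈ H.small, a * b ∉ H.small := by
      simpa [Subgroup.smallStab, ha] using hst
    have habS : a * b ∉ H.coeSubmonoid := fun h => hb.2.1 ((mul_mem_coeSubmonoid_iff haS).1 h)
    have hab' : (a * b)⁻¹ ∈ H.small :=
      (hH.mem_small_or_inv_mem_small _ (mul_ne_zero ha hb.1) habS).resolve_left hab
    refine .inr (.inr (hH.mem_smallStab_of_mem (inv_mem_coeSubmonoid haS) fun r hr hc =>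
      hH.mul_mul_mul_ne_one hab' hc hb hr ?_))
    field_simp [hr.1, hb.1]
  · rcases hH.mem_small_or_inv_mem_small a ha haS with h | h
    · exact .inl (.inl h)
    · exact .inr (.inl h)

theorem inv_not_mem_of_mem_small {a : K} (ha : a ∈ H.small) : a⁻¹ ∉ H.small ∪ H.smallStab := by
  rintro (h | h)
  · exact hH.mul_ne_one ha h (mul_inv_cancel₀ ha.1)
  · exact one_not_mem_small (inv_mul_cancel₀ ha.1 ▸ h.2 a ha)

def valuationSubring : ValuationSubring K where
  carrier := insert 0 (H.small ∪ H.smallStab)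
  zero_mem' := Set.mem_insert _ _
  one_mem' := .inr (.inr ⟨one_ne_zero, fun b hb => (one_mul b).symm ▸ hb⟩)
  add_mem' := by
    rintro a b (rfl | ha) (rfl | hb)
    · simp
    · simpa using .inr hb
    · simpa using .inr ha
    · by_cases hab : a + b = 0
      · exact .inl hab
      · exact .inr (hH.add_mem ha hb hab)
  mul_mem' := by
    rintro a b (rfl | ha) (rfl | hb)
    · simp
    · simp
    · simp
    · exact .inr (hH.mul_mem ha hb)
  neg_mem' := by
    rintro a (rfl | ha)
    · simp
    · exact .inr (hH.neg_mem ha)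
  mem_or_inv_mem' a := by
    rcases eq_or_ne a 0 with rfl | ha
    · exact .inl (.inl rfl)
    · exact (hH.mem_or_inv_mem ha).imp .inr .inr

theorem unitGroup_valuationSubring_le : hH.valuationSubring.unitGroup ≤ H := by
  have mem : ∀ x ∈ hH.valuationSubring.unitGroup, (x : K) ∈ H.small ∪ H.smallStab :=
    fun x hx => (hH.valuationSubring.mem_of_valuation_le_one _
      ((ValuationSubring.mem_unitGroup_iff _ x).1 hx).le).resolve_left x.ne_zero
  intro x hx
  by_contra hxH
  rcases hH.mem_small_or_inv_mem_small x x.ne_zero (mt coe_mem_coeSubmonoid.1 hxH) with h | h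
  · exact hH.inv_not_mem_of_mem_small h (by simpa using mem _ (inv_mem hx))
  · exact hH.inv_not_mem_of_mem_small h (by simpa using mem x hx)

end IsValuative

end Subgroup

/-- A subgroup `H ≤ K^×` contains the unit group of some valuation subring of `K`
iff it satisfies the arithmetic conditions of Lemma `valuative`. -/
theorem stmt_0 {K : Type*} [Field K] (H : Subgroup Kˣ) :
    (∃ O : ValuationSubring K, O.unitGroup ≤ H) ↔
      ((-1 : Kˣ) ∈ H ∧
        (∀ x : Kˣ, x ∉ H →
          (∃ h ∈ H, ((h : Kˣ) : K) = 1 + (x : K)) ∨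
          (∃ h ∈ H, (x : K) * ((h : Kˣ) : K) = 1 + (x : K))) ∧
        (∀ x y : Kˣ, x ∉ H → y ∉ H →
          (∃ h ∈ H, ((h : Kˣ) : K) = 1 + (x : K)) →
          (∃ h ∈ H, ((h : Kˣ) : K) = 1 + (y : K)) →
          (∃ h ∈ H, ((h : Kˣ) : K) = 1 + (x : K) * (1 + (y : K))))) := by
  constructor
  · rintro ⟨O, hO⟩
    refine ⟨hO (by simp [ValuationSubring.mem_unitGroup_iff]), fun x hx => ?_,
      fun x y hx hy hx1 hy1 => ?_⟩
    · exact H.one_add_mem_or_exists_mul_eq_one_add hO (mt H.coe_mem_coeSubmonoid.1 hx)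
    · exact H.one_add_mul_one_add_mem_coeSubmonoid hO
        ⟨x.ne_zero, mt H.coe_mem_coeSubmonoid.1 hx, hx1⟩
        ⟨y.ne_zero, mt H.coe_mem_coeSubmonoid.1 hy, hy1⟩
  · rintro ⟨hneg, hdich, hclosed⟩
    have hH := Subgroup.IsValuative.of_forall_one_add_mem hneg hdich hclosed
    exact ⟨hH.valuationSubring, hH.unitGroup_valuationSubring_le⟩
end

section
/- Let K be a field and H a proper subgroup of K^× that is not valuative, i.e. no valuation subring of K has unit group contained in H. Let O₁ and O₂ be valuation subrings of K with maximal ideals m₁ and m₂ such that {1+a : a ∈ m₁} ⊆ H and {1+a : a ∈ m₂} ⊆ H. Then O₁ and O₂ are comparable: O₁ ⊆ O₂ or O₂ ⊆ O₁. -/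
/-! A unit `w` with `v₁ w < 1 < v₂ w` lies in `H`, because `w = (1 + w) / (1 + w⁻¹)` and both
factors lie in `1 + m₁` resp. `1 + m₂`. If `O₁` and `O₂` were incomparable, `x / y` with
`x ∈ O₁ \ O₂` and `y ∈ O₂ \ O₁` would be such a unit `a`; then every unit `u` of `O₁` is a
quotient of two such units, `u = (u a) / a` or `u = a / (u⁻¹ a)`, so `O₁^× ≤ H`, contradicting
that `H` is not valuative. -/

theorem Units.eq_mul_inv_of_coe_eq_one_add {R : Type*} [Ring R] {u h h' : Rˣ}
    (hh : (h : R) = 1 + u) (hh' : (h' : R) = 1 + (u⁻¹ : Rˣ)) : u = h * h'⁻¹ := by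
  rw [_root_.eq_mul_inv_iff_mul_eq, Units.ext_iff, Units.val_mul, hh, hh', mul_add, Units.mul_inv,
    mul_one, add_comm]

namespace ValuationSubring

variable {K : Type*} [Field K] {O₁ O₂ : ValuationSubring K}

theorem exists_valuation_lt_one_one_lt_of_not_le (h₁₂ : ¬ O₁ ≤ O₂) (h₂₁ : ¬ O₂ ≤ O₁) :
    ∃ a : Kˣ, O₁.valuation a < 1 ∧ 1 < O₂.valuation a := by
  obtain ⟨x, hx₁, hx₂⟩ := SetLike.not_le_iff_exists.mp h₁₂
  obtain ⟨y, hy₂, hy₁⟩ := SetLike.not_le_iff_exists.mp h₂₁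
  have hx₀ : x ≠ 0 := fun h ↦ hx₂ (h ▸ O₂.zero_mem)
  have hy₀ : y ≠ 0 := fun h ↦ hy₁ (h ▸ O₁.zero_mem)
  rw [← valuation_le_one_iff] at hx₁ hy₂ hx₂ hy₁
  refine ⟨Units.mk0 x hx₀ / Units.mk0 y hy₀, ?_, ?_⟩
  · rw [Units.val_div_eq_div_val, map_div₀, div_lt_one₀ ((Valuation.pos_iff _).mpr hy₀)]
    exact hx₁.trans_lt (not_le.mp hy₁)
  · rw [Units.val_div_eq_div_val, map_div₀, one_lt_div₀ ((Valuation.pos_iff _).mpr hy₀)]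
    exact hy₂.trans_lt (not_le.mp hx₂)

theorem unitGroup_le_of_forall_mem {H : Subgroup Kˣ} {a : Kˣ} (ha₁ : O₁.valuation a < 1)
    (ha₂ : 1 < O₂.valuation a)
    (hH : ∀ w : Kˣ, O₁.valuation w < 1 → 1 < O₂.valuation w → w ∈ H) :
    O₁.unitGroup ≤ H := by
  have of_one_le : ∀ u ∈ O₁.unitGroup, 1 ≤ O₂.valuation u → u ∈ H := by
    intro u hu hu₂
    have hua : u * a ∈ H := by
      apply hH
      · rwa [Units.val_mul, map_mul, (mem_unitGroup_iff _ _).mp hu, one_mul]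
      · rw [Units.val_mul, map_mul]
        exact one_lt_mul_of_le_of_lt hu₂ ha₂
    simpa using H.mul_mem hua (H.inv_mem (hH a ha₁ ha₂))
  intro u hu
  rcases le_total 1 (O₂.valuation u) with hu₂ | hu₂
  · exact of_one_le u hu hu₂
  · refine H.inv_mem_iff.mp (of_one_le _ (O₁.unitGroup.inv_mem hu) ?_)
    rw [Units.val_inv_eq_inv_val, map_inv₀]
    exact one_le_inv_iff₀.mpr ⟨(Valuation.pos_iff _).mpr u.ne_zero, hu₂⟩

end ValuationSubring

open ValuationSubring in
theorem stmt_2_general {K : Type*} [Field K] (H : Subgroup Kˣ)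
    (hnval : ¬ ∃ O : ValuationSubring K, O.unitGroup ≤ H)
    (O₁ O₂ : ValuationSubring K)
    (h1 : ∀ a : K, O₁.valuation a < 1 → ∃ h ∈ H, ((h : Kˣ) : K) = 1 + a)
    (h2 : ∀ a : K, O₂.valuation a < 1 → ∃ h ∈ H, ((h : Kˣ) : K) = 1 + a) :
    O₁ ≤ O₂ ∨ O₂ ≤ O₁ := by
  by_contra! hcon
  obtain ⟨a, ha₁, ha₂⟩ := exists_valuation_lt_one_one_lt_of_not_le hcon.1 hcon.2
  refine hnval ⟨O₁, unitGroup_le_of_forall_mem ha₁ ha₂ fun w hw₁ hw₂ ↦ ?_⟩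
  obtain ⟨h, hH, hh⟩ := h1 w hw₁
  have hw₂' : O₂.valuation (w⁻¹ : Kˣ) < 1 := by
    rwa [Units.val_inv_eq_inv_val, ← Valuation.one_lt_val_iff _ w.ne_zero]
  obtain ⟨h', hH', hh'⟩ := h2 _ hw₂'
  rw [Units.eq_mul_inv_of_coe_eq_one_add hh hh']
  exact H.mul_mem hH (H.inv_mem hH')

/-- If `H ≤ K^×` is a proper subgroup which is not valuative, then any two
valuation subrings `O₁`, `O₂` of `K` with `1 + m_i ⊆ H` are comparable. -/
theorem stmt_2 {K : Type*} [Field K] (H : Subgroup Kˣ) (hne : H ≠ ⊤)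
    (hnval : ¬ ∃ O : ValuationSubring K, O.unitGroup ≤ H)
    (O₁ O₂ : ValuationSubring K)
    (h1 : ∀ a : K, O₁.valuation a < 1 → ∃ h ∈ H, ((h : Kˣ) : K) = 1 + a)
    (h2 : ∀ a : K, O₂.valuation a < 1 → ∃ h ∈ H, ((h : Kˣ) : K) = 1 + a) :
    O₁ ≤ O₂ ∨ O₂ ≤ O₁ :=
  stmt_2_general H hnval O₁ O₂ h1 h2
end

section
/- Let K be a field, ℓ a prime, and T a rigid subgroup of K^× with K^{×ℓ} ⊆ T. Let (H_i)_{i∈I} be a family of valuative subgroups of K^× with T ⊆ H_i for every i. Then the intersection ⋂_{i∈I} H_i is valuative. -/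
/-- A subgroup `T ≤ K^×` (containing `K^{×ℓ}`) is rigid if for every `x ∈ K^× \ T` the
subgroup of `K^×/T` generated by the images of `x` and `1 - x` is cyclic. -/
def IsRigid {K : Type*} [Field K] (T : Subgroup Kˣ) : Prop :=
  ∀ x : Kˣ, x ∉ T → ∀ h : (1 : K) - (x : K) ≠ 0,
    IsCyclic ↥(Subgroup.closure {(QuotientGroup.mk x : Kˣ ⧸ T),
      QuotientGroup.mk (Units.mk0 ((1 : K) - (x : K)) h)})

/-- A subgroup `H ≤ K^×` is valuative if it contains the unit group of a valuation subring. -/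
def IsValuative {K : Type*} [Field K] (H : Subgroup Kˣ) : Prop :=
  ∃ O : ValuationSubring K, O.unitGroup ≤ H

/-!
By Zorn, each `H i` contains the units of a valuation ring `O i` maximal with this property, and
rigidity makes any two such maximal rings `O₁, O₂` comparable. Otherwise, for a unit `c` of the
compositum `O₁ ⊔ O₂` outside `T` one finds `y` with `X = c y^ℓ` in the maximal ideal of `O₁` and
`X⁻¹` in that of `O₂`. Then `1 - X` is a unit of `O₁` and `(1 - X) / X` one of `O₂`, while
rigidity gives `1 - X ≡ X^k (mod T)`; so `X^k ∈ H₁`, `X^(k-1) ∈ H₂`, and as one of `k, k - 1` is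
prime to `ℓ`, `X` (hence `c`) lies in `H₁` or `H₂`. A group covered by two subgroups lies in one
of them, so the units of `O₁ ⊔ O₂` lie in `H₁` or in `H₂`, contradicting maximality. Finally, the
intersection of pairwise comparable valuation rings is a valuation ring whose units lie in every
`H i`.
-/
section Exponent

variable {G : Type*} [Group G]

theorem mem_zpowers_of_isCyclic_closure_pair {p : ℕ} [Fact p.Prime] (hG : ∀ g : G, g ^ p = 1)
    {x y : G} (hcyc : IsCyclic (Subgroup.closure {x, y})) (hx : x ≠ 1) :
    y ∈ Subgroup.zpowers x := by
  set C := Subgroup.closure {x, y}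
  have hxC : x ∈ C := Subgroup.subset_closure (by simp)
  have hyC : y ∈ C := Subgroup.subset_closure (by simp)
  have hcard : Nat.card C = p := by
    have hdvd : Nat.card C ∣ p := IsCyclic.exponent_eq_card (α := C) ▸
      Monoid.exponent_dvd_of_forall_pow_eq_one fun g ↦ Subtype.ext (hG g)
    refine ((Nat.dvd_prime Fact.out).mp hdvd).resolve_left fun h ↦ hx ?_
    rw [Subgroup.card_eq_one] at h
    exact (Subgroup.mem_bot.mp (h ▸ hxC))
  obtain ⟨k, hk⟩ := Subgroup.mem_zpowers_iff.mp
    (mem_zpowers_of_prime_card hcard (g := ⟨x, hxC⟩) (g' := ⟨y, hyC⟩) (by simpa using hx))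
  exact Subgroup.mem_zpowers_iff.mpr ⟨k, congrArg Subtype.val hk⟩

theorem Subgroup.mem_of_zpow_mem_of_not_dvd {H : Subgroup G} {p : ℕ} (hp : p.Prime) {x : G}
    (hxp : x ^ p ∈ H) {k : ℤ} (hxk : x ^ k ∈ H) (hk : ¬(p : ℤ) ∣ k) : x ∈ H := by
  obtain ⟨m, n, hmn⟩ :=
    (Irreducible.coprime_iff_not_dvd (Nat.prime_iff_prime_int.mp hp).irreducible).mpr hk
  have hx : x ^ ((p : ℤ) * m + k * n) = x := by rw [mul_comm (p : ℤ), mul_comm k, hmn, zpow_one]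
  rw [← hx, zpow_add, zpow_mul, zpow_mul, zpow_natCast]
  exact mul_mem (zpow_mem hxp m) (zpow_mem hxk n)

theorem Subgroup.mem_or_mem_of_zpow_mem {H₁ H₂ : Subgroup G} {p : ℕ} (hp : p.Prime) {x : G}
    (hxp₁ : x ^ p ∈ H₁) (hxp₂ : x ^ p ∈ H₂) {k : ℤ} (hxk : x ^ k ∈ H₁)
    (hxk' : x ^ (k - 1) ∈ H₂) : x ∈ H₁ ∨ x ∈ H₂ := by
  by_cases hk : (p : ℤ) ∣ k
  · refine .inr (mem_of_zpow_mem_of_not_dvd hp hxp₂ hxk' fun hk' ↦ hp.not_dvd_one ?_)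
    exact Int.natCast_dvd_natCast.mp (by simpa using dvd_sub hk hk')
  · exact .inl (mem_of_zpow_mem_of_not_dvd hp hxp₁ hxk hk)

end Exponent

section Rigid

variable {K : Type*} [Field K]

theorem IsRigid.exists_zpow_mem {ℓ : ℕ} (hℓ : ℓ.Prime) {T : Subgroup Kˣ}
    (hpow : ∀ x : Kˣ, x ^ ℓ ∈ T) (hrig : IsRigid T) {x : Kˣ} (hx : x ∉ T)
    (h : (1 : K) - x ≠ 0) : ∃ k : ℤ, (Units.mk0 (1 - (x : K)) h)⁻¹ * x ^ k ∈ T := by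
  have := Fact.mk hℓ
  have hexp (q : Kˣ ⧸ T) : q ^ ℓ = 1 := by
    induction q using QuotientGroup.induction_on with
    | H u => exact (QuotientGroup.eq_one_iff _).mpr (hpow u)
  obtain ⟨k, hk⟩ := Subgroup.mem_zpowers_iff.mp <| mem_zpowers_of_isCyclic_closure_pair hexp
    (hrig x hx h) (by rwa [Ne, QuotientGroup.eq_one_iff])
  exact ⟨k, QuotientGroup.eq.mp (by rw [QuotientGroup.mk_zpow]; exact hk.symm)⟩

end Rigid

namespace ValuationSubring

variable {K : Type*} [Field K]

theorem mem_unitGroup_iff_mem_and_inv_mem (A : ValuationSubring K) (x : Kˣ) :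
    x ∈ A.unitGroup ↔ (x : K) ∈ A ∧ (x : K)⁻¹ ∈ A := by
  have hx : A.valuation x ≠ 0 := by simp
  rw [mem_unitGroup_iff, ← valuation_le_one_iff, ← valuation_le_one_iff, map_inv₀,
    inv_le_one₀ (zero_lt_iff.mpr hx), le_antisymm_iff]

theorem mem_sup_iff {O₁ O₂ : ValuationSubring K} {x : K} :
    x ∈ O₁ ⊔ O₂ ↔ ∃ a ∈ O₁, ∃ b ∈ O₂, a * b = x := by
  refine ⟨fun hx ↦ ?_, ?_⟩
  · let S : Subring K :=
      { carrier := {x | ∃ a ∈ O₁, ∃ b ∈ O₂, a * b = x}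
        mul_mem' := by
          rintro _ _ ⟨a, ha, b, hb, rfl⟩ ⟨a', ha', b', hb', rfl⟩
          exact ⟨a * a', O₁.mul_mem _ _ ha ha', b * b', O₂.mul_mem _ _ hb hb', by ring⟩
        one_mem' := ⟨1, O₁.one_mem, 1, O₂.one_mem, one_mul 1⟩
        add_mem' := by
          rintro _ _ ⟨a, ha, b, hb, rfl⟩ ⟨a', ha', b', hb', rfl⟩
          -- factor out whichever of `b, b'` has the larger `O₁`-valuation
          rcases le_total (O₁.valuation b) (O₁.valuation b') with h | h
          · obtain ⟨⟨r, hr⟩, rfl⟩ := (O₁.valuation_le_iff _ _).mp h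
            exact ⟨a * r + a', O₁.add_mem _ _ (O₁.mul_mem _ _ ha hr) ha', b', hb', by ring⟩
          · obtain ⟨⟨r, hr⟩, rfl⟩ := (O₁.valuation_le_iff _ _).mp h
            exact ⟨a + a' * r, O₁.add_mem _ _ ha (O₁.mul_mem _ _ ha' hr), b, hb, by ring⟩
        zero_mem' := ⟨0, O₁.zero_mem, 1, O₂.one_mem, zero_mul 1⟩
        neg_mem' := by
          rintro _ ⟨a, ha, b, hb, rfl⟩
          exact ⟨-a, O₁.neg_mem _ ha, b, hb, by ring⟩ }
    have hle : O₁.toSubring ⊔ O₂.toSubring ≤ S :=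
      sup_le (fun a ha ↦ ⟨a, ha, 1, O₂.one_mem, mul_one a⟩)
        (fun b hb ↦ ⟨1, O₁.one_mem, b, hb, one_mul b⟩)
    exact hle hx
  · rintro ⟨a, ha, b, hb, rfl⟩
    exact (O₁ ⊔ O₂).mul_mem _ _ (le_sup_left (b := O₂) ha) (le_sup_right (a := O₁) hb)

theorem mul_mem_nonunits {A : ValuationSubring K} {a b : K} (ha : a ∈ A)
    (hb : b ∈ A.nonunits) : a * b ∈ A.nonunits := by
  rw [mem_nonunits_iff, map_mul]
  exact Right.mul_lt_one_of_le_of_lt ((A.valuation_le_one_iff a).mpr ha)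
    (A.mem_nonunits_iff.mp hb)

theorem mul_mul_pow_succ_mem_nonunits {A : ValuationSubring K} {a b s z : K} (ha : a ∈ A)
    (hs : s ∈ A) (hbs : b * s ∈ A) (hz : z ∈ A.nonunits) (n : ℕ) :
    a * b * (z * s) ^ (n + 1) ∈ A.nonunits := by
  have h : a * b * (z * s) ^ (n + 1) = a * (b * s) * s ^ n * z ^ n * z := by ring
  rw [h]
  refine mul_mem_nonunits (A.mul_mem _ _ (A.mul_mem _ _ (A.mul_mem _ _ ha hbs) ?_) ?_) hz
  exacts [A.pow_mem hs n, A.pow_mem (nonunits_subset hz) n]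

theorem one_sub_ne_zero_of_mem_nonunits {A : ValuationSubring K} {x : K}
    (hx : x ∈ A.nonunits) : 1 - x ≠ 0 := by
  intro h
  rw [← sub_eq_zero.mp h, mem_nonunits_iff, map_one] at hx
  exact lt_irrefl _ hx

theorem exists_upperBound_of_isChain {c : Set (ValuationSubring K)} (hc : IsChain (· ≤ ·) c)
    {O₀ : ValuationSubring K} (hO₀ : O₀ ∈ c) :
    ∃ B : ValuationSubring K,
      (∀ O ∈ c, O ≤ B) ∧ ∀ u ∈ B.unitGroup, ∃ O ∈ c, u ∈ O.unitGroup := by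
  have hdir : DirectedOn (· ≤ ·) (toSubring '' c) :=
    (Monotone.isChain_image (f := toSubring) (fun _ _ h ↦ h) hc).directedOn
  have hmem (x : K) : x ∈ sSup (toSubring '' c) ↔ ∃ O ∈ c, x ∈ O := by
    simp [Subring.mem_sSup_of_directedOn ⟨_, Set.mem_image_of_mem toSubring hO₀⟩ hdir]
  refine ⟨O₀.ofLE _ (le_sSup (Set.mem_image_of_mem _ hO₀)),
    fun O hO x hx ↦ (hmem x).mpr ⟨O, hO, hx⟩, fun u hu ↦ ?_⟩
  obtain ⟨hu, hu'⟩ := (mem_unitGroup_iff_mem_and_inv_mem _ u).mp hu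
  obtain ⟨O, hO, hu⟩ := (hmem _).mp hu
  obtain ⟨O', hO', hu'⟩ := (hmem _).mp hu'
  rcases hc.total hO hO' with h | h
  · exact ⟨O', hO', (mem_unitGroup_iff_mem_and_inv_mem _ u).mpr ⟨h hu, hu'⟩⟩
  · exact ⟨O, hO, (mem_unitGroup_iff_mem_and_inv_mem _ u).mpr ⟨hu, h hu'⟩⟩

theorem exists_forall_le_of_le_total {ι : Type*} (O : ι → ValuationSubring K)
    (h : ∀ i j, O i ≤ O j ∨ O j ≤ O i) : ∃ A : ValuationSubring K, ∀ i, A ≤ O i := by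
  refine ⟨ofSubring (⨅ i, (O i).toSubring) fun x ↦ ?_, fun i x hx ↦ Subring.mem_iInf.mp hx i⟩
  simp only [Subring.mem_iInf, mem_toSubring]
  by_cases hx : ∀ i, x ∈ O i
  · exact .inl hx
  push Not at hx
  obtain ⟨i, hi⟩ := hx
  refine .inr fun j ↦ ?_
  rcases h i j with hij | hji
  · exact hij (((O i).mem_or_inv_mem x).resolve_left hi)
  · exact ((O j).mem_or_inv_mem x).resolve_left fun hj ↦ hi (hji hj)

end ValuationSubring

section Valuative

variable {K : Type*} [Field K]

theorem exists_mem_nonunits_inv_mem_nonunits {O₁ O₂ : ValuationSubring K} (h₁₂ : ¬O₁ ≤ O₂)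
    (h₂₁ : ¬O₂ ≤ O₁) : ∃ z : K, z ≠ 0 ∧ z ∈ O₁.nonunits ∧ z⁻¹ ∈ O₂.nonunits := by
  obtain ⟨a, ha₁, ha₂⟩ := SetLike.not_le_iff_exists.mp h₁₂
  obtain ⟨b, hb₂, hb₁⟩ := SetLike.not_le_iff_exists.mp h₂₁
  have ha : a ≠ 0 := by rintro rfl; exact ha₂ O₂.zero_mem
  have hb : b ≠ 0 := by rintro rfl; exact hb₁ O₁.zero_mem
  refine ⟨a * b⁻¹, mul_ne_zero ha (inv_ne_zero hb),
    ValuationSubring.mul_mem_nonunits ha₁ (O₁.inv_mem_nonunits_iff.mpr (.inr hb₁)), ?_⟩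
  rw [mul_inv, inv_inv, mul_comm]
  exact ValuationSubring.mul_mem_nonunits hb₂ (O₂.inv_mem_nonunits_iff.mpr (.inr ha₂))

theorem exists_mem_inv_mem_mul_mem (O₁ O₂ : ValuationSubring K) {b : K} (hb : b ∈ O₂) :
    ∃ q : K, q ≠ 0 ∧ q ∈ O₁ ∧ q⁻¹ ∈ O₂ ∧ b * q ∈ O₁ := by
  by_cases hb₁ : b ∈ O₁
  · exact ⟨1, one_ne_zero, O₁.one_mem, by simp [O₂.one_mem], by simpa using hb₁⟩
  · have hb₀ : b ≠ 0 := by rintro rfl; exact hb₁ O₁.zero_mem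
    refine ⟨b⁻¹, inv_ne_zero hb₀, (O₁.mem_or_inv_mem b).resolve_left hb₁, by simpa using hb, ?_⟩
    simp [hb₀, O₁.one_mem]

theorem exists_mul_pow_succ_mem_nonunits {O₁ O₂ : ValuationSubring K} (h₁₂ : ¬O₁ ≤ O₂)
    (h₂₁ : ¬O₂ ≤ O₁) {c : Kˣ} (hc : c ∈ (O₁ ⊔ O₂).unitGroup) (n : ℕ) :
    ∃ y : Kˣ, ((c * y ^ (n + 1) : Kˣ) : K) ∈ O₁.nonunits ∧
      ((c * y ^ (n + 1) : Kˣ) : K)⁻¹ ∈ O₂.nonunits := by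
  obtain ⟨hc, hc'⟩ := (ValuationSubring.mem_unitGroup_iff_mem_and_inv_mem _ c).mp hc
  obtain ⟨a, ha, b, hb, hab⟩ := ValuationSubring.mem_sup_iff.mp hc
  obtain ⟨b', hb', a', ha', hab'⟩ := ValuationSubring.mem_sup_iff.mp (sup_comm O₁ O₂ ▸ hc')
  obtain ⟨z, hz, hz₁, hz₂⟩ := exists_mem_nonunits_inv_mem_nonunits h₁₂ h₂₁
  obtain ⟨q, hq, hq₁, hq₂, hbq⟩ := exists_mem_inv_mem_mul_mem O₁ O₂ hb
  obtain ⟨p, hp, hp₂, hp₁, hap⟩ := exists_mem_inv_mem_mul_mem O₂ O₁ ha'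
  -- `z` pushes `X = c y^(n+1)` into both maximal ideals; `q` and `p⁻¹` absorb the factors
  -- `b ∉ O₁` of `c = a b` and `a' ∉ O₂` of `c⁻¹ = b' a'`
  let y := Units.mk0 (z * (q * p⁻¹)) (by simp [hz, hq, hp])
  refine ⟨y, ?_, ?_⟩
  · have h : ((c * y ^ (n + 1) : Kˣ) : K) = a * b * (z * (q * p⁻¹)) ^ (n + 1) := by
      simp [y, hab]
    rw [h]
    refine ValuationSubring.mul_mul_pow_succ_mem_nonunits ha (O₁.mul_mem _ _ hq₁ hp₁) ?_ hz₁ n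
    rw [← mul_assoc]
    exact O₁.mul_mem _ _ hbq hp₁
  · have h : ((c * y ^ (n + 1) : Kˣ) : K)⁻¹ = b' * a' * (z⁻¹ * (p * q⁻¹)) ^ (n + 1) := by
      simp only [y, Units.val_mul, Units.val_pow_eq_pow_val, Units.val_mk0, mul_inv, ← inv_pow,
        inv_inv, ← hab', mul_comm q⁻¹]
    rw [h]
    refine ValuationSubring.mul_mul_pow_succ_mem_nonunits hb' (O₂.mul_mem _ _ hp₂ hq₂) ?_ hz₂ n
    rw [← mul_assoc]
    exact O₂.mul_mem _ _ hap hq₂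

end Valuative

section Comparable

variable {K : Type*} [Field K] {ℓ : ℕ} {T H₁ H₂ : Subgroup Kˣ} {O₁ O₂ : ValuationSubring K}

theorem mem_or_mem_of_mem_nonunits (hℓ : ℓ.Prime) (hpow : ∀ x : Kˣ, x ^ ℓ ∈ T)
    (hrig : IsRigid T) (hT₁ : T ≤ H₁) (hT₂ : T ≤ H₂) (hO₁ : O₁.unitGroup ≤ H₁)
    (hO₂ : O₂.unitGroup ≤ H₂) {X : Kˣ} (hX : X ∉ T) (hX₁ : (X : K) ∈ O₁.nonunits)
    (hX₂ : (X : K)⁻¹ ∈ O₂.nonunits) : X ∈ H₁ ∨ X ∈ H₂ := by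
  set u := Units.mk0 _ (ValuationSubring.one_sub_ne_zero_of_mem_nonunits hX₁)
  have hu₁ : u ∈ O₁.unitGroup := O₁.valuation.map_one_sub_of_lt (O₁.mem_nonunits_iff.mp hX₁)
  have hu₂ : u * X⁻¹ ∈ O₂.unitGroup := by
    have h : ((u * X⁻¹ : Kˣ) : K) = -(1 - (X : K)⁻¹) := by
      simp only [u, Units.val_mul, Units.val_mk0, Units.val_inv_eq_inv_val]
      field_simp
      ring
    rw [ValuationSubring.mem_unitGroup_iff, h, Valuation.map_neg]
    exact O₂.valuation.map_one_sub_of_lt (O₂.mem_nonunits_iff.mp hX₂)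
  obtain ⟨k, hk⟩ := hrig.exists_zpow_mem hℓ hpow hX _
  refine Subgroup.mem_or_mem_of_zpow_mem hℓ (hT₁ (hpow X)) (hT₂ (hpow X)) (k := k) ?_ ?_
  · have h : X ^ k = u * (u⁻¹ * X ^ k) := by group
    exact h ▸ mul_mem (hO₁ hu₁) (hT₁ hk)
  · have h : X ^ (k - 1) = u * X⁻¹ * (u⁻¹ * X ^ k) := by
      rw [mul_mul_mul_comm, mul_inv_cancel, one_mul, zpow_sub_one, mul_comm]
    exact h ▸ mul_mem (hO₂ hu₂) (hT₂ hk)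

theorem mem_or_mem_of_mem_unitGroup_sup (hℓ : ℓ.Prime) (hpow : ∀ x : Kˣ, x ^ ℓ ∈ T)
    (hrig : IsRigid T) (hT₁ : T ≤ H₁) (hT₂ : T ≤ H₂) (hO₁ : O₁.unitGroup ≤ H₁)
    (hO₂ : O₂.unitGroup ≤ H₂) (h₁₂ : ¬O₁ ≤ O₂) (h₂₁ : ¬O₂ ≤ O₁) {c : Kˣ}
    (hc : c ∈ (O₁ ⊔ O₂).unitGroup) : c ∈ H₁ ∨ c ∈ H₂ := by
  by_cases hcT : c ∈ T
  · exact .inl (hT₁ hcT)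
  obtain ⟨n, rfl⟩ := Nat.exists_eq_succ_of_ne_zero hℓ.ne_zero
  obtain ⟨y, hy₁, hy₂⟩ := exists_mul_pow_succ_mem_nonunits h₁₂ h₂₁ hc n
  have hX : c * y ^ (n + 1) ∉ T := fun h ↦ hcT ((T.mul_mem_cancel_right (hpow y)).mp h)
  refine (mem_or_mem_of_mem_nonunits hℓ hpow hrig hT₁ hT₂ hO₁ hO₂ hX hy₁ hy₂).imp ?_ ?_
  · exact (H₁.mul_mem_cancel_right (hT₁ (hpow y))).mp
  · exact (H₂.mul_mem_cancel_right (hT₂ (hpow y))).mp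

theorem le_total_of_maximal (hℓ : ℓ.Prime) (hpow : ∀ x : Kˣ, x ^ ℓ ∈ T) (hrig : IsRigid T)
    (hT₁ : T ≤ H₁) (hT₂ : T ≤ H₂)
    (hO₁ : Maximal (fun O : ValuationSubring K ↦ O.unitGroup ≤ H₁) O₁)
    (hO₂ : Maximal (fun O : ValuationSubring K ↦ O.unitGroup ≤ H₂) O₂) : O₁ ≤ O₂ ∨ O₂ ≤ O₁ := by
  by_contra! h
  obtain ⟨h₁₂, h₂₁⟩ := h
  rcases SubgroupClass.subset_union.mp fun c hc ↦ mem_or_mem_of_mem_unitGroup_sup hℓ hpow hrig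
      hT₁ hT₂ hO₁.1 hO₂.1 h₁₂ h₂₁ hc with h | h
  · exact h₂₁ (le_sup_right.trans (hO₁.2 h le_sup_left))
  · exact h₁₂ (le_sup_left.trans (hO₂.2 h le_sup_right))

end Comparable

theorem IsValuative.exists_maximal {K : Type*} [Field K] {H : Subgroup Kˣ}
    (hH : IsValuative H) :
    ∃ O : ValuationSubring K, Maximal (fun O : ValuationSubring K ↦ O.unitGroup ≤ H) O := by
  obtain ⟨O₀, hO₀⟩ := hH
  have hchain (c : Set (ValuationSubring K)) (hcH : c ⊆ {O | O.unitGroup ≤ H})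
      (hc : IsChain (· ≤ ·) c) (O : ValuationSubring K) (hO : O ∈ c) :
      ∃ B ∈ {O : ValuationSubring K | O.unitGroup ≤ H}, ∀ O ∈ c, O ≤ B := by
    obtain ⟨B, hB, hBu⟩ := ValuationSubring.exists_upperBound_of_isChain hc hO
    refine ⟨B, fun u hu ↦ ?_, hB⟩
    obtain ⟨O', hO', hu⟩ := hBu u hu
    exact hcH hO' hu
  obtain ⟨O, -, hO⟩ := zorn_le_nonempty₀ _ hchain O₀ hO₀
  exact ⟨O, hO⟩

/-- If `T` is rigid (with `K^{×ℓ} ⊆ T`) and `(H_i)` is a family of valuative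
subgroups containing `T`, then `⋂ H_i` is valuative. -/
theorem stmt_3 {K : Type*} [Field K] (ℓ : ℕ) (hℓ : ℓ.Prime) (T : Subgroup Kˣ)
    (hpow : ∀ x : Kˣ, x ^ ℓ ∈ T) (hrig : IsRigid T)
    {ι : Type*} (Hf : ι → Subgroup Kˣ)
    (hval : ∀ i, IsValuative (Hf i)) (hTH : ∀ i, T ≤ Hf i) :
    IsValuative (⨅ i, Hf i) := by
  choose O hO using fun i ↦ (hval i).exists_maximal
  obtain ⟨A, hA⟩ := ValuationSubring.exists_forall_le_of_le_total O fun i j ↦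
    le_total_of_maximal hℓ hpow hrig (hTH i) (hTH j) (hO i) (hO j)
  exact ⟨A, le_iInf fun i ↦
    (ValuationSubring.unitGroup_le_unitGroup.mpr (hA i)).trans (hO i).1⟩
end

section
/- Let K be a field, ℓ a prime, and T a subgroup of K^× with K^{×ℓ} ⊆ T and −1 ∈ T. Let Q be the quotient of the tensor product of abelian groups (K^×/T) ⊗_ℤ (K^×/T) by the subgroup generated by all elements ā ⊗ b̄, where a, b ∈ K^× are such that there exist s, t ∈ T with as + bt = 1. Then T is rigid if and only if for all x, y ∈ K^× whose images in K^×/T generate a non-cyclic subgroup, the class of x̄ ⊗ ȳ in Q is nonzero. (Q is the degree-2 part K₂^M(K)/T of the quotient of the Milnor K-ring of K by T.) -/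
open scoped TensorProduct

noncomputable instance {G : Type*} [CommGroup G] (T : Subgroup G) :
    Module ℤ (Additive (G ⧸ T)) :=
  AddCommGroup.toIntModule _

/-- The quotient `K^×/T`, written additively. -/
abbrev ModT (K : Type*) [Field K] (T : Subgroup Kˣ) := Additive (Kˣ ⧸ T)

/-- The image of `x` in `K^×/T`, written additively. -/
def modT {K : Type*} [Field K] (T : Subgroup Kˣ) (x : Kˣ) : ModT K T :=
  Additive.ofMul (QuotientGroup.mk x : Kˣ ⧸ T)

/-- The Steinberg relations modulo `T`: the subgroup of `(K^×/T) ⊗ (K^×/T)` generated by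
all `ā ⊗ b̄` where `a s + b t = 1` for some `s, t ∈ T`. -/
noncomputable def steinbergRel (K : Type*) [Field K] (T : Subgroup Kˣ) :
    AddSubgroup (ModT K T ⊗[ℤ] ModT K T) :=
  AddSubgroup.closure
    {z | ∃ a b : Kˣ, (∃ s ∈ T, ∃ t ∈ T,
        (a : K) * ((s : Kˣ) : K) + (b : K) * ((t : Kˣ) : K) = 1) ∧
      z = modT T a ⊗ₜ[ℤ] modT T b}

/-! If `T` is rigid, each Steinberg generator `ā ⊗ b̄` has `ā, b̄` in a common cyclic subgroup of
the `𝔽_ℓ`-vector space `K^×/T`, so every alternating form vanishes on it. For independent `x̄, ȳ`,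
functionals with `φ x̄ = 0 ≠ φ ȳ` and `ψ ȳ = 0 ≠ ψ x̄` give the alternating form
`ψ ⊗ φ - φ ⊗ ψ`, which is nonzero on `x̄ ⊗ ȳ`; hence `x̄ ⊗ ȳ` survives in `Q`. Conversely,
`x ⊗ (1 - x)` is itself a Steinberg generator. -/

open QuotientGroup Subgroup

theorem Subgroup.isCyclic_closure_pair_of_mem_zpowers {G : Type*} [Group G] {x y : G}
    (h : x ∈ zpowers y) : IsCyclic (closure {x, y}) := by
  have : closure {x, y} = zpowers y :=
    le_antisymm ((closure_le _).2 (by simp [Set.insert_subset_iff, h, mem_zpowers]))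
      (zpowers_le.2 (subset_closure (by simp)))
  exact this ▸ inferInstance

theorem Subgroup.exists_zpow_eq_of_isCyclic_closure_pair {G : Type*} [Group G] {x y : G}
    (h : IsCyclic (closure {x, y})) : ∃ (g : G) (m n : ℤ), g ^ m = x ∧ g ^ n = y := by
  obtain ⟨g, hg⟩ := (Subgroup.isCyclic_iff_exists_zpowers_eq_top _).1 h
  obtain ⟨m, hm⟩ := mem_zpowers_iff.1 (hg ▸ subset_closure (by simp) : x ∈ zpowers g)
  obtain ⟨n, hn⟩ := mem_zpowers_iff.1 (hg ▸ subset_closure (by simp) : y ∈ zpowers g)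
  exact ⟨g, m, n, hm, hn⟩

theorem LinearMap.BilinForm.exists_isAlt_apply_ne_zero {F V : Type*} [Field F] [AddCommGroup V]
    [Module F V] {x y : V} (hx : x ∉ Submodule.span F {y}) (hy : y ∉ Submodule.span F {x}) :
    ∃ B : LinearMap.BilinForm F V, B.IsAlt ∧ B x y ≠ 0 := by
  obtain ⟨φ, hφy, hφx⟩ := Submodule.exists_dual_map_eq_bot_of_notMem hy inferInstance
  obtain ⟨ψ, hψx, hψy⟩ := Submodule.exists_dual_map_eq_bot_of_notMem hx inferInstance
  have hφx : φ x = 0 := by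
    simpa using hφx.le (Submodule.mem_map_of_mem (Submodule.mem_span_singleton_self x))
  have hψy : ψ y = 0 := by
    simpa using hψy.le (Submodule.mem_map_of_mem (Submodule.mem_span_singleton_self y))
  refine ⟨linMulLin ψ φ - linMulLin φ ψ, fun v ↦ ?_, ?_⟩
  · simp [mul_comm]
  · simpa [hφx, hψy] using mul_ne_zero hψx hφy

def cyclicTensorSubgroup (G : Type*) [CommGroup G] :
    AddSubgroup (Additive G ⊗[ℤ] Additive G) :=
  AddSubgroup.closure
    {z | ∃ a b : G, IsCyclic (closure {a, b}) ∧ z = Additive.ofMul a ⊗ₜ[ℤ] Additive.ofMul b}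

theorem ofMul_tmul_ofMul_notMem_cyclicTensorSubgroup {G : Type*} [CommGroup G] {ℓ : ℕ}
    (hℓ : ℓ.Prime) (hexp : ∀ g : G, g ^ ℓ = 1) {x y : G} (hxy : ¬IsCyclic (closure {x, y})) :
    Additive.ofMul x ⊗ₜ[ℤ] Additive.ofMul y ∉ cyclicTensorSubgroup G := by
  have : Fact ℓ.Prime := ⟨hℓ⟩
  have hsmul (v : Additive G) : ℓ • v = 0 := congrArg Additive.ofMul (hexp v.toMul)
  obtain ⟨_⟩ : Nonempty (Module (ZMod ℓ) (Additive G)) := ⟨AddCommGroup.zmodModule hsmul⟩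
  have notMem_span {u v : G} (huv : ¬IsCyclic (closure {u, v})) :
      Additive.ofMul u ∉ Submodule.span (ZMod ℓ) {Additive.ofMul v} := by
    intro hmem
    obtain ⟨c, hc⟩ := Submodule.mem_span_singleton.1 hmem
    have hu : u = v ^ c.val := by
      apply Additive.ofMul.injective
      rw [ofMul_pow, ← Nat.cast_smul_eq_nsmul (ZMod ℓ), ZMod.natCast_zmod_val, hc]
    exact huv (isCyclic_closure_pair_of_mem_zpowers (hu ▸ npow_mem_zpowers v c.val))
  obtain ⟨B, hBalt, hBxy⟩ := LinearMap.BilinForm.exists_isAlt_apply_ne_zero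
    (notMem_span hxy) (notMem_span (by rwa [Set.pair_comm]))
  let L := TensorProduct.lift (B.restrictScalars₁₂ ℤ ℤ)
  have hker : cyclicTensorSubgroup G ≤ L.toAddMonoidHom.ker := by
    refine (AddSubgroup.closure_le _).2 ?_
    rintro _ ⟨a, b, hab, rfl⟩
    obtain ⟨g, m, n, rfl, rfl⟩ := exists_zpow_eq_of_isCyclic_closure_pair hab
    simp [L, ofMul_zpow, hBalt (Additive.ofMul g)]
  exact fun hmem ↦ hBxy (hker hmem)

theorem IsRigid.isCyclic_closure_mk {K : Type*} [Field K] {T : Subgroup Kˣ} (hT : IsRigid T)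
    {a b s t : Kˣ} (hs : s ∈ T) (ht : t ∈ T) (h : (a : K) * s + b * t = 1) :
    IsCyclic (closure {(mk a : Kˣ ⧸ T), mk b}) := by
  rw [← mk_mul_of_mem a hs, ← mk_mul_of_mem b ht]
  have hbt : (1 : K) - ((a * s : Kˣ) : K) = ((b * t : Kˣ) : K) := by
    push_cast
    linear_combination -h
  by_cases has : a * s ∈ T
  · rw [(QuotientGroup.eq_one_iff _).2 has]
    exact isCyclic_closure_pair_of_mem_zpowers (one_mem _)
  · have hne : (1 : K) - ((a * s : Kˣ) : K) ≠ 0 := hbt ▸ Units.ne_zero _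
    rw [← show Units.mk0 _ hne = b * t from Units.ext hbt]
    exact hT (a * s) has hne

theorem IsRigid.steinbergRel_le {K : Type*} [Field K] {T : Subgroup Kˣ} (hT : IsRigid T) :
    steinbergRel K T ≤ cyclicTensorSubgroup (Kˣ ⧸ T) := by
  refine (AddSubgroup.closure_le _).2 ?_
  rintro _ ⟨a, b, ⟨s, hs, t, ht, h⟩, rfl⟩
  exact AddSubgroup.subset_closure ⟨mk a, mk b, hT.isCyclic_closure_mk hs ht h, rfl⟩

theorem stmt_5_general {K : Type*} [Field K] (ℓ : ℕ) (hℓ : ℓ.Prime) (T : Subgroup Kˣ)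
    (hpow : ∀ x : Kˣ, x ^ ℓ ∈ T) :
    IsRigid T ↔
      ∀ x y : Kˣ,
        ¬ IsCyclic ↥(Subgroup.closure {(QuotientGroup.mk x : Kˣ ⧸ T), QuotientGroup.mk y}) →
        (QuotientAddGroup.mk (modT T x ⊗ₜ[ℤ] modT T y)
          : (ModT K T ⊗[ℤ] ModT K T) ⧸ steinbergRel K T) ≠ 0 := by
  have hexp : ∀ g : Kˣ ⧸ T, g ^ ℓ = 1 :=
    QuotientGroup.forall_mk.2 fun x ↦ (QuotientGroup.eq_one_iff _).2 (hpow x)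
  refine ⟨fun hT x y hxy hzero ↦ ?_, fun h x _ hx1 ↦ ?_⟩
  · exact ofMul_tmul_ofMul_notMem_cyclicTensorSubgroup hℓ hexp hxy
      (hT.steinbergRel_le ((QuotientAddGroup.eq_zero_iff _).1 hzero))
  · by_contra hnc
    refine h x _ hnc ((QuotientAddGroup.eq_zero_iff _).2 (AddSubgroup.subset_closure ?_))
    exact ⟨x, _, ⟨1, one_mem T, 1, one_mem T, by simp⟩, rfl⟩

/-- `T` is rigid iff for all `x, y ∈ K^×` whose images generate a non-cyclic
subgroup of `K^×/T`, the class of `x̄ ⊗ ȳ` in `K₂^M(K)/T` (the quotient `Q` of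
`(K^×/T) ⊗ (K^×/T)` by the Steinberg relations) is nonzero. -/
theorem stmt_5 {K : Type*} [Field K] (ℓ : ℕ) (hℓ : ℓ.Prime) (T : Subgroup Kˣ)
    (hpow : ∀ x : Kˣ, x ^ ℓ ∈ T) (hneg : (-1 : Kˣ) ∈ T) :
    IsRigid T ↔
      ∀ x y : Kˣ,
        ¬ IsCyclic ↥(Subgroup.closure {(QuotientGroup.mk x : Kˣ ⧸ T), QuotientGroup.mk y}) →
        (QuotientAddGroup.mk (modT T x ⊗ₜ[ℤ] modT T y)
          : (ModT K T ⊗[ℤ] ModT K T) ⧸ steinbergRel K T) ≠ 0 :=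
  stmt_5_general ℓ hℓ T hpow
end

section
/- Let ℓ be a prime, K a field with char K ≠ ℓ, L a field extension of K, w a valuation on L and v its restriction to K, with m_v = {a ∈ K : w(a) < 1} the maximal ideal of the valuation ring of v. Fix n ≥ 1 and assume that every element of 1+m_v admits an ℓⁿ-th root in L. Then the convex subgroup of Γ_v generated by v(ℓ) is contained in ℓⁿ·Γ_w; concretely, for every x ∈ K^× such that w(ℓ)^m ≤ w(x) ≤ w(ℓ)^{−m} for some natural number m, there exists y ∈ L^× with w(x) = w(y)^{ℓⁿ}. -/
/-!
Write `q = ℓ ^ n` and `λ = w ℓ`. If `a ∈ m_v` and `y ^ q = 1 + a`, then `w y = 1`, and for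
`b = y - 1` the binomial theorem gives `a = b ^ q + ℓ b r` with `w r ≤ 1`, because `ℓ` divides the
inner binomial coefficients of `(b + 1) ^ q`. As soon as `λ ^ q < (w a) ^ (q - 1)`, in particular
when `λ ≤ w a < 1`, the term `b ^ q` must dominate, so `w a = (w b) ^ q`. This covers `λ` and all
values in `[λ, 1]`; a value in `[λ ^ m, 1]` is brought into that range by dividing by a power of
`ℓ`, and a value above `1` is handled through its inverse.
-/

namespace Valuation

variable {R Γ : Type*} [LinearOrderedCommGroupWithZero Γ]

section Ring

variable [Ring R] (w : Valuation R Γ)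

lemma map_natCast_le_one (k : ℕ) : w k ≤ 1 :=
  (w.mem_integer_iff _).mp (natCast_mem w.integer k)

lemma map_eq_pow_of_map_sub_pow_le {z b : R} {c : Γ} {q : ℕ} (hq : q ≠ 0)
    (hsub : w (z - b ^ q) ≤ c * w b) (hz : c ^ q < w z ^ (q - 1)) : w z = w b ^ q := by
  by_cases hlt : w (z - b ^ q) < w (b ^ q)
  · rw [w.map_eq_of_sub_lt hlt, map_pow]
  rw [not_lt, map_pow] at hlt
  have hzle : w z ≤ c * w b := calc
    w z = w ((z - b ^ q) + b ^ q) := by rw [sub_add_cancel]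
    _ ≤ max (w (z - b ^ q)) (w (b ^ q)) := w.map_add _ _
    _ ≤ c * w b := max_le hsub (by rw [map_pow]; exact hlt.trans hsub)
  rcases eq_or_ne (w b) 0 with hb | hb
  · rw [hb, mul_zero, le_zero_iff] at hzle
    rw [hzle, hb, zero_pow hq]
  exfalso
  have hbc : w b ^ (q - 1) ≤ c := by
    refine le_of_mul_le_mul_right ?_ (zero_lt_iff.mpr hb)
    rw [← pow_succ, Nat.sub_add_cancel (Nat.one_le_iff_ne_zero.mpr hq)]
    exact hlt.trans hsub
  refine hz.not_ge ?_
  calc w z ^ (q - 1) ≤ (c * w b) ^ (q - 1) := pow_le_pow_left₀ zero_le hzle _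
    _ = c ^ (q - 1) * w b ^ (q - 1) := mul_pow _ _ _
    _ ≤ c ^ (q - 1) * c := by gcongr
    _ = c ^ q := by rw [← pow_succ, Nat.sub_add_cancel (Nat.one_le_iff_ne_zero.mpr hq)]

end Ring

section CommRing

variable [CommRing R] (w : Valuation R Γ)

lemma exists_add_one_pow_prime_pow_eq {p : ℕ} (hp : p.Prime) (n : ℕ) {b : R} (hb : w b ≤ 1) :
    ∃ r, w r ≤ 1 ∧ (b + 1) ^ p ^ n = b ^ p ^ n + 1 + p * b * r := by
  obtain ⟨r, hr⟩ := exists_add_pow_prime_pow_eq hp (⟨b, hb⟩ : w.integer) 1 n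
  refine ⟨r, r.2, ?_⟩
  simpa using congrArg Subtype.val hr

lemma map_eq_map_sub_one_pow_of_pow_eq_one_add {p : ℕ} (hp : p.Prime) (n : ℕ) {y z : R}
    (hy : y ^ p ^ n = 1 + z) (hz1 : w z < 1) (hz : w (p : R) ^ p ^ n < w z ^ (p ^ n - 1)) :
    w z = w (y - 1) ^ p ^ n := by
  have hq : p ^ n ≠ 0 := pow_ne_zero n hp.ne_zero
  have hwy : w y = 1 := by
    have : w y ^ p ^ n = 1 := by rw [← map_pow, hy, w.map_one_add_of_lt hz1]
    exact (pow_eq_one_iff.mp this).resolve_right hq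
  obtain ⟨r, hr, hexp⟩ := w.exists_add_one_pow_prime_pow_eq hp n (b := y - 1)
    ((w.map_sub y 1).trans (by rw [hwy, map_one, max_self]))
  refine w.map_eq_pow_of_map_sub_pow_le hq ?_ hz
  have : z - (y - 1) ^ p ^ n = p * (y - 1) * r := by
    rw [sub_add_cancel] at hexp
    linear_combination hexp - hy
  rw [this, map_mul, map_mul]
  exact mul_le_of_le_one_right' hr

end CommRing

end Valuation

section Extension

variable {K L Γ : Type*} [Field K] [Field L] [Algebra K L] [LinearOrderedCommGroupWithZero Γ]

/-- `1 + m_v ⊆ (L ^×) ^ q`, where `m_v` is the maximal ideal of the restriction of `w` to `K`. -/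
def HasRootsOfPrincipalUnits (K : Type*) [Field K] [Algebra K L] (w : Valuation L Γ) (q : ℕ) :
    Prop :=
  ∀ a : K, w (algebraMap K L a) < 1 → ∃ y : L, y ^ q = 1 + algebraMap K L a

/-- `g ∈ q·Γ_w`. -/
def Valuation.IsPowOfValue (w : Valuation L Γ) (q : ℕ) (g : Γ) : Prop :=
  ∃ y : L, y ≠ 0 ∧ g = w y ^ q

namespace Valuation.IsPowOfValue

variable {w : Valuation L Γ} {q : ℕ} {g h : Γ}

lemma one : w.IsPowOfValue q 1 := ⟨1, one_ne_zero, by rw [map_one, one_pow]⟩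

lemma mul (hg : w.IsPowOfValue q g) (hh : w.IsPowOfValue q h) : w.IsPowOfValue q (g * h) := by
  obtain ⟨y, hy, rfl⟩ := hg
  obtain ⟨z, hz, rfl⟩ := hh
  exact ⟨y * z, mul_ne_zero hy hz, by rw [map_mul, mul_pow]⟩

lemma inv (hg : w.IsPowOfValue q g) : w.IsPowOfValue q g⁻¹ := by
  obtain ⟨y, hy, rfl⟩ := hg
  exact ⟨y⁻¹, inv_ne_zero hy, by rw [map_inv₀, inv_pow]⟩

end Valuation.IsPowOfValue

variable {w : Valuation L Γ} {ℓ n : ℕ}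

lemma isPowOfValue_of_le_of_le_one (hℓ : ℓ.Prime) (hroot : HasRootsOfPrincipalUnits K w (ℓ ^ n))
    {x : K} (hx : x ≠ 0) (hle : w (ℓ : L) ≤ w (algebraMap K L x))
    (hle_one : w (algebraMap K L x) ≤ 1) : w.IsPowOfValue (ℓ ^ n) (w (algebraMap K L x)) := by
  set g := w (algebraMap K L x) with hg_def
  set q := ℓ ^ n
  have hq : q ≠ 0 := pow_ne_zero n hℓ.ne_zero
  have hg : g ≠ 0 := by simpa [g] using hx
  rcases hle_one.eq_or_lt with hg1 | hg1
  · rw [hg1]; exact .one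
  obtain ⟨y, hy⟩ := hroot x hg1
  have hbig : w (ℓ : L) ^ q < g ^ (q - 1) := calc
    w (ℓ : L) ^ q = w (ℓ : L) ^ (q - 1) * w (ℓ : L) := by
      rw [← pow_succ, Nat.sub_add_cancel (Nat.one_le_iff_ne_zero.mpr hq)]
    _ ≤ g ^ (q - 1) * g := by gcongr
    _ < g ^ (q - 1) := mul_lt_of_lt_one_right (zero_lt_iff.mpr (pow_ne_zero _ hg)) hg1
  have hval := w.map_eq_map_sub_one_pow_of_pow_eq_one_add hℓ n hy hg1 hbig
  refine ⟨y - 1, fun hy1 => hg ?_, hval⟩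
  rw [hg_def, hval, hy1, map_zero, zero_pow hq]

lemma isPowOfValue_of_pow_le_of_le_one (hℓ : ℓ.Prime)
    (hroot : HasRootsOfPrincipalUnits K w (ℓ ^ n)) (m : ℕ) {x : K} (hx : x ≠ 0)
    (hle : w (ℓ : L) ^ m ≤ w (algebraMap K L x)) (hle_one : w (algebraMap K L x) ≤ 1) :
    w.IsPowOfValue (ℓ ^ n) (w (algebraMap K L x)) := by
  induction m generalizing x with
  | zero => rw [le_antisymm hle_one (pow_zero (w (ℓ : L)) ▸ hle)]; exact .one
  | succ m ih =>
    rcases le_or_gt (w (ℓ : L)) (w (algebraMap K L x)) with hℓx | hxℓ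
    · exact isPowOfValue_of_le_of_le_one hℓ hroot hx hℓx hle_one
    have hwℓ : w (ℓ : L) ≠ 0 := (zero_lt_iff.mpr (by simpa using hx)).trans hxℓ |>.ne'
    have hℓK : (ℓ : K) ≠ 0 := by rintro h; simp [← map_natCast (algebraMap K L), h] at hwℓ
    have hquot : w (algebraMap K L (x / ℓ)) = w (algebraMap K L x) / w (ℓ : L) := by
      rw [map_div₀, map_div₀, map_natCast]
    have hrec := ih (div_ne_zero hx hℓK)
      (by rw [hquot, le_div_iff₀ (zero_lt_iff.mpr hwℓ), ← pow_succ]; exact hle)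
      (by rw [hquot, div_le_one₀ (zero_lt_iff.mpr hwℓ)]; exact hxℓ.le)
    rw [hquot] at hrec
    have hℓpow : w.IsPowOfValue (ℓ ^ n) (w (ℓ : L)) := by
      simpa using isPowOfValue_of_le_of_le_one hℓ hroot hℓK (by simp)
        (by simpa using w.map_natCast_le_one ℓ)
    simpa [div_mul_cancel₀ _ hwℓ] using hrec.mul hℓpow

end Extension

theorem stmt_8_general {K L : Type*} [Field K] [Field L] [Algebra K L]
    {Γ : Type*} [LinearOrderedCommGroupWithZero Γ]
    (ℓ n : ℕ) (hℓ : ℓ.Prime)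
    (w : Valuation L Γ)
    (hroot : ∀ a : K, w (algebraMap K L a) < 1 →
      ∃ y : L, y ^ ℓ ^ n = 1 + algebraMap K L a) :
    ∀ x : K, x ≠ 0 →
      (∃ m : ℕ, w (algebraMap K L (ℓ : K)) ^ m ≤ w (algebraMap K L x) ∧
        w (algebraMap K L x) ≤ (w (algebraMap K L (ℓ : K)))⁻¹ ^ m) →
      ∃ y : L, y ≠ 0 ∧ w (algebraMap K L x) = w y ^ ℓ ^ n := by
  rintro x hx ⟨m, hlo, hhi⟩
  rw [map_natCast] at hlo hhi
  rcases le_or_gt (w (algebraMap K L x)) 1 with hle | hgt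
  · exact isPowOfValue_of_pow_le_of_le_one hℓ hroot m hx hlo hle
  have hinv : w (algebraMap K L x⁻¹) = (w (algebraMap K L x))⁻¹ := by
    rw [map_inv₀, map_inv₀]
  have hx0 : 0 < w (algebraMap K L x) := zero_lt_iff.mpr (by simpa using hx)
  rw [inv_pow] at hhi
  have hℓm : 0 < w (ℓ : L) ^ m :=
    zero_lt_iff.mpr fun h => hx0.not_ge (by simpa [h] using hhi)
  have hxinv := isPowOfValue_of_pow_le_of_le_one hℓ hroot m (inv_ne_zero hx)
    (by rw [hinv]; exact (le_inv_comm₀ hℓm hx0).mpr hhi)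
    (by rw [hinv]; exact inv_le_one_of_one_le₀ hgt.le)
  rw [hinv] at hxinv
  exact inv_inv (w (algebraMap K L x)) ▸ hxinv.inv

/-- let `K` be a field with `char K ≠ ℓ`, `L/K` a field extension, `w` a
(multiplicative) valuation on `L` and `v` its restriction to `K`.  If every element of
`1 + m_v` has an `ℓⁿ`-th root in `L`, then the convex subgroup of `Γ_v` generated by
`v(ℓ)` is contained in `ℓⁿ·Γ_w`: for every `x ∈ K^×` with
`w(ℓ)^m ≤ w(x) ≤ w(ℓ)^{-m}` for some `m : ℕ`, there is `y ∈ L^×` with `w(x) = w(y)^{ℓⁿ}`. -/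
theorem stmt_8 {K L : Type*} [Field K] [Field L] [Algebra K L]
    {Γ : Type*} [LinearOrderedCommGroupWithZero Γ]
    (ℓ n : ℕ) (hℓ : ℓ.Prime) (hchar : ringChar K ≠ ℓ) (hn : 1 ≤ n)
    (w : Valuation L Γ)
    (hroot : ∀ a : K, w (algebraMap K L a) < 1 →
      ∃ y : L, y ^ ℓ ^ n = 1 + algebraMap K L a) :
    ∀ x : K, x ≠ 0 →
      (∃ m : ℕ, w (algebraMap K L (ℓ : K)) ^ m ≤ w (algebraMap K L x) ∧
        w (algebraMap K L x) ≤ (w (algebraMap K L (ℓ : K)))⁻¹ ^ m) →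
      ∃ y : L, y ≠ 0 ∧ w (algebraMap K L x) = w y ^ ℓ ^ n :=
  stmt_8_general ℓ n hℓ w hroot
end
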